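/- Let s(m) = [m^{γ₁}] with 0 < γ₁ < 1, where [·] denotes rounding. Using the bounds m − (a_s/2^{1/3})m^{1/3} < j_{m,s} < m − (a_s/2^{1/3})m^{1/3} + (3/20)a_s²·2^{1/3}/m^{1/3}, where a_s = −((3π/8)(4s−1))^{2/3}(1+σ_s) with 0 ≤ σ_s ≤ 0.130((3π/8)(4s−1.051))^{−2}, one has the asymptotic j_{m,s(m)} = m(1 + C₀ m^{2(γ₁−1)/3} + o(m^{2(γ₁−1)/3})) as m → ∞, for some positive constant C₀. -/

import Mathlib

/-!
Along `s = ⌊m^γ⌋` we have `s ~ m^γ` and `σ_s → 0`, so `-a_s ~ (3πs/2)^{2/3} ~ (3π/2)^{2/3} m^{2γ/3}`.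
Dividing the two-sided bound on `j_{m,s}` by `m · m^{2(γ-1)/3}`, the leading term tends to
`C₀ = (3π/2)^{2/3} / 2^{1/3}`, and the correction `a_s² / m^{1/3}` becomes
`(a_s / m^{2γ/3})² · m^{2(γ-1)/3}`, which tends to `0` because `γ < 1`.
-/

open Filter Asymptotics Topology

lemma tendsto_zero_of_nonneg_of_le_inv_sq {σ : ℕ → ℝ} {b c d : ℝ} (hb : 0 < b)
    (h0 : ∀ s : ℕ, 1 ≤ s → 0 ≤ σ s)
    (h1 : ∀ s : ℕ, 1 ≤ s → σ s ≤ c * ((b * (4 * (s : ℝ) - d)) ^ 2)⁻¹) :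
    Tendsto σ atTop (𝓝 0) := by
  have hlin : Tendsto (fun s : ℕ => b * (4 * (s : ℝ) - d)) atTop atTop :=
    (tendsto_atTop_add_const_right _ _
      (tendsto_natCast_atTop_atTop.const_mul_atTop four_pos)).const_mul_atTop hb
  have hbound : Tendsto (fun s : ℕ => c * ((b * (4 * (s : ℝ) - d)) ^ 2)⁻¹) atTop (𝓝 0) := by
    simpa using ((tendsto_pow_atTop two_ne_zero).comp hlin).inv_tendsto_atTop.const_mul c
  exact tendsto_of_tendsto_of_tendsto_of_le_of_le' tendsto_const_nhds hbound
    (eventually_atTop.2 ⟨1, h0⟩) (eventually_atTop.2 ⟨1, h1⟩)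

lemma tendsto_neg_div_rpow_two_thirds {a σ : ℕ → ℝ} {b : ℝ} (hb : 0 ≤ b)
    (ha : ∀ s : ℕ, 1 ≤ s → a s = -(b * (4 * (s : ℝ) - 1)) ^ ((2 : ℝ) / 3) * (1 + σ s))
    (hσ : Tendsto σ atTop (𝓝 0)) :
    Tendsto (fun s : ℕ => -a s / (s : ℝ) ^ ((2 : ℝ) / 3)) atTop
      (𝓝 ((4 * b) ^ ((2 : ℝ) / 3))) := by
  have hlin : Tendsto (fun s : ℕ => b * (4 * (s : ℝ) - 1) / s) atTop (𝓝 (4 * b)) := by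
    have h := (tendsto_inv_atTop_nhds_zero_nat (𝕜 := ℝ)).const_sub 4 |>.const_mul b
    rw [sub_zero, mul_comm] at h
    refine h.congr' ?_
    filter_upwards [eventually_ge_atTop 1] with s hs
    have : (s : ℝ) ≠ 0 := by positivity
    field_simp
  have hlim := (hlin.rpow_const (Or.inr (by norm_num : (0:ℝ) ≤ 2 / 3))).mul (hσ.const_add 1)
  rw [add_zero, mul_one] at hlim
  refine hlim.congr' ?_
  filter_upwards [eventually_ge_atTop 1] with s hs
  have hs' : (1 : ℝ) ≤ s := by exact_mod_cast hs
  rw [ha s hs, Real.div_rpow (mul_nonneg hb (by linarith)) (by positivity)]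
  ring

lemma tendsto_floor_div_rpow {f : ℕ → ℝ} {p L : ℝ}
    (hf : Tendsto (fun s : ℕ => f s / (s : ℝ) ^ p) atTop (𝓝 L)) :
    Tendsto (fun x : ℝ => f ⌊x⌋₊ / x ^ p) atTop (𝓝 L) := by
  have hratio : Tendsto (fun x : ℝ => ((⌊x⌋₊ : ℝ) / x) ^ p) atTop (𝓝 1) := by
    simpa using tendsto_nat_floor_div_atTop.rpow_const (p := p) (Or.inl one_ne_zero)
  have hlim := (hf.comp tendsto_nat_floor_atTop).mul hratio
  rw [mul_one] at hlim
  refine hlim.congr' ?_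
  filter_upwards [eventually_ge_atTop 1] with x hx
  have hfl : (0 : ℝ) < ⌊x⌋₊ := by exact_mod_cast Nat.floor_pos.2 hx
  have : (0 : ℝ) < (⌊x⌋₊ : ℝ) ^ p := Real.rpow_pos_of_pos hfl p
  rw [Function.comp_apply, Real.div_rpow hfl.le (by linarith)]
  field_simp

lemma sub_one_div_rpow_bounds {m a c k γ J : ℝ} (hm : 0 < m) (hc : c ≠ 0)
    (hlow : m - a / c * m ^ ((1 : ℝ) / 3) < J)
    (hup : J < m - a / c * m ^ ((1 : ℝ) / 3) + k * a ^ 2 * c / m ^ ((1 : ℝ) / 3)) :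
    -a / (m ^ γ) ^ ((2 : ℝ) / 3) / c < (J / m - 1) / m ^ (2 * (γ - 1) / 3) ∧
      (J / m - 1) / m ^ (2 * (γ - 1) / 3) <
        -a / (m ^ γ) ^ ((2 : ℝ) / 3) / c +
          k * c * (-a / (m ^ γ) ^ ((2 : ℝ) / 3)) ^ 2 * m ^ (2 * (γ - 1) / 3) := by
  have hu : 0 < m ^ ((1 : ℝ) / 3) := Real.rpow_pos_of_pos hm _
  have hw : 0 < m ^ (2 * (γ - 1) / 3) := Real.rpow_pos_of_pos hm _
  have hm3 : m = (m ^ ((1 : ℝ) / 3)) ^ 3 := by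
    rw [← Real.rpow_natCast, ← Real.rpow_mul hm.le]; norm_num
  have hv : (m ^ γ) ^ ((2 : ℝ) / 3) = (m ^ ((1 : ℝ) / 3)) ^ 2 * m ^ (2 * (γ - 1) / 3) := by
    rw [← Real.rpow_mul hm.le, ← Real.rpow_natCast, ← Real.rpow_mul hm.le,
      ← Real.rpow_add hm]
    ring_nf
  rw [hv]
  generalize m ^ ((1 : ℝ) / 3) = u at *
  generalize m ^ (2 * (γ - 1) / 3) = w at *
  subst hm3
  constructor
  · have hdiff : (J / u ^ 3 - 1) / w - -a / (u ^ 2 * w) / c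
        = (J - (u ^ 3 - a / c * u)) / (u ^ 3 * w) := by
      field_simp; ring
    have : 0 < (J - (u ^ 3 - a / c * u)) / (u ^ 3 * w) := div_pos (by linarith) (by positivity)
    linarith
  · have hdiff : -a / (u ^ 2 * w) / c + k * c * (-a / (u ^ 2 * w)) ^ 2 * w - (J / u ^ 3 - 1) / w
        = (u ^ 3 - a / c * u + k * a ^ 2 * c / u - J) / (u ^ 3 * w) := by
      field_simp; ring
    have : 0 < (u ^ 3 - a / c * u + k * a ^ 2 * c / u - J) / (u ^ 3 * w) :=
      div_pos (by linarith) (by positivity)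
    linarith

/-- Let `s(m) = [m^γ₁]` with `0 < γ₁ < 1`.  Using the sharp bounds
`m − (a_s/2^{1/3})m^{1/3} < j_{m,s} < m − (a_s/2^{1/3})m^{1/3} + (3/20)a_s²·2^{1/3}/m^{1/3}`,
where `a_s = −((3π/8)(4s−1))^{2/3}(1+σ_s)` with `0 ≤ σ_s ≤ 0.130((3π/8)(4s−1.051))^{−2}`,
one has `j_{m,s(m)} = m(1 + C₀ m^{2(γ₁−1)/3} + o(m^{2(γ₁−1)/3}))` as `m → ∞`,
for some constant `C₀ > 0`. -/
theorem stmt6 (j : ℕ → ℕ → ℝ) (a σ' : ℕ → ℝ) (γ₁ : ℝ) (hγ0 : 0 < γ₁) (hγ1 : γ₁ < 1)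
    (ha : ∀ s : ℕ, 1 ≤ s →
      a s = -((3 * Real.pi / 8) * (4 * (s : ℝ) - 1)) ^ ((2 : ℝ) / 3) * (1 + σ' s))
    (hσ0 : ∀ s : ℕ, 1 ≤ s → 0 ≤ σ' s)
    (hσ1 : ∀ s : ℕ, 1 ≤ s →
      σ' s ≤ 0.130 * (((3 * Real.pi / 8) * (4 * (s : ℝ) - 1.051)) ^ 2)⁻¹)
    (hlow : ∀ m s : ℕ, 1 ≤ m → 1 ≤ s →
      (m : ℝ) - a s / 2 ^ ((1 : ℝ) / 3) * (m : ℝ) ^ ((1 : ℝ) / 3) < j m s)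
    (hup : ∀ m s : ℕ, 1 ≤ m → 1 ≤ s →
      j m s < (m : ℝ) - a s / 2 ^ ((1 : ℝ) / 3) * (m : ℝ) ^ ((1 : ℝ) / 3) +
        (3 / 20) * (a s) ^ 2 * 2 ^ ((1 : ℝ) / 3) / (m : ℝ) ^ ((1 : ℝ) / 3)) :
    ∃ C₀ > (0 : ℝ), ∃ e : ℕ → ℝ,
      (e =o[atTop] fun m : ℕ => (m : ℝ) ^ (2 * (γ₁ - 1) / 3)) ∧
      ∀ᶠ m : ℕ in atTop,
        j m ⌊(m : ℝ) ^ γ₁⌋₊ =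
          (m : ℝ) * (1 + C₀ * (m : ℝ) ^ (2 * (γ₁ - 1) / 3) + e m) := by
  set α := 2 * (γ₁ - 1) / 3 with hα
  set L := (4 * (3 * Real.pi / 8)) ^ ((2 : ℝ) / 3)
  set c : ℝ := 2 ^ ((1 : ℝ) / 3)
  have hc : 0 < c := by positivity
  set s : ℕ → ℕ := fun m => ⌊(m : ℝ) ^ γ₁⌋₊
  set B : ℕ → ℝ := fun m => -a (s m) / ((m : ℝ) ^ γ₁) ^ ((2 : ℝ) / 3)
  set r : ℕ → ℝ := fun m => (j m (s m) / m - 1) / (m : ℝ) ^ α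
  have hmγ : Tendsto (fun m : ℕ => (m : ℝ) ^ γ₁) atTop atTop :=
    (tendsto_rpow_atTop hγ0).comp tendsto_natCast_atTop_atTop
  have hB : Tendsto B atTop (𝓝 L) :=
    (tendsto_floor_div_rpow (f := fun s => -a s) (tendsto_neg_div_rpow_two_thirds (by positivity)
      ha (tendsto_zero_of_nonneg_of_le_inv_sq (by positivity) hσ0 hσ1))).comp hmγ
  have hpow : Tendsto (fun m : ℕ => (m : ℝ) ^ α) atTop (𝓝 0) := by
    have h := (tendsto_rpow_neg_atTop (y := -α) (by rw [hα]; linarith)).comp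
      tendsto_natCast_atTop_atTop
    rwa [neg_neg] at h
  have hupper : Tendsto (fun m => B m / c + 3 / 20 * c * B m ^ 2 * (m : ℝ) ^ α) atTop
      (𝓝 (L / c)) := by
    simpa using (hB.div_const c).add (((hB.pow 2).const_mul (3 / 20 * c)).mul hpow)
  have hbounds : ∀ᶠ m in atTop,
      B m / c < r m ∧ r m < B m / c + 3 / 20 * c * B m ^ 2 * (m : ℝ) ^ α := by
    filter_upwards [eventually_ge_atTop 1, (tendsto_nat_floor_atTop.comp hmγ).eventually_ge_atTop 1]
      with m hm hs
    exact sub_one_div_rpow_bounds (by positivity) hc.ne' (hlow m _ hm hs) (hup m _ hm hs)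
  have hr : Tendsto r atTop (𝓝 (L / c)) :=
    tendsto_of_tendsto_of_tendsto_of_le_of_le' (hB.div_const c) hupper
      (hbounds.mono fun _ h => h.1.le) (hbounds.mono fun _ h => h.2.le)
  refine ⟨L / c, by positivity, fun m => j m (s m) / m - 1 - L / c * (m : ℝ) ^ α, ?_, ?_⟩
  · have hpos : ∀ᶠ m : ℕ in atTop, (m : ℝ) ^ α ≠ 0 :=
      (eventually_ge_atTop 1).mono fun m hm => (Real.rpow_pos_of_pos (by positivity) _).ne'
    rw [isLittleO_iff_tendsto' (hpos.mono fun m hm h => absurd h hm), ← sub_self (L / c)]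
    refine (hr.sub_const (L / c)).congr' (hpos.mono fun m hm => ?_)
    simp only [r, sub_div, mul_div_cancel_right₀ _ hm]
  · filter_upwards [eventually_ge_atTop 1] with m hm
    have : (m : ℝ) ≠ 0 := by positivity
    field_simp
    ring
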